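/- arXiv:1407.8227 — 4 statements merged into one kernel-verified Lean document; each statement's English description precedes it below -/
import Mathlib

section
/- Let L be a finite-dimensional Lie algebra over a field K that is generated (as a Lie algebra) by two elements x and y. If there exists n such that (ad ⁅x,y⁆)ⁿ x = 0 and (ad ⁅x,y⁆)ⁿ y = 0, then the endomorphism ad ⁅x,y⁆ of L is nilpotent. -/
/-- Lemma 1: if a finite-dimensional Lie algebra `L` is generated by `x` and `y`
and some power of `ad ⁅x,y⁆` kills both `x` and `y`, then `ad ⁅x,y⁆` is a
nilpotent endomorphism of `L`. -/
theorem ad_bracket_nilpotent_of_two_generated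
    (K : Type*) (L : Type*) [Field K]
    [LieRing L] [LieAlgebra K L] [FiniteDimensional K L]
    (x y : L) (hgen : LieSubalgebra.lieSpan K L {x, y} = ⊤)
    (h : ∃ n : ℕ, (LieAlgebra.ad K L ⁅x, y⁆ ^ n) x = 0 ∧ (LieAlgebra.ad K L ⁅x, y⁆ ^ n) y = 0) :
    IsNilpotent (LieAlgebra.ad K L ⁅x, y⁆) := by
  obtain ⟨n, hx, hy⟩ := h
  have hE : LieSubalgebra.engel K ⁅x, y⁆ = ⊤ := by
    rw [← top_le_iff, ← hgen]
    apply LieSubalgebra.lieSpan_le.mpr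
    rintro z (rfl | rfl)
    · exact (LieSubalgebra.mem_engel_iff K _ _).mpr ⟨n, hx⟩
    · exact (LieSubalgebra.mem_engel_iff K _ _).mpr ⟨n, hy⟩
  refine ((LinearMap.charpoly_nilpotent_tfae (LieAlgebra.ad K L ⁅x, y⁆)).out 2 0).mp ?_
  intro m
  have : m ∈ LieSubalgebra.engel K ⁅x, y⁆ := hE ▸ trivial
  exact (LieSubalgebra.mem_engel_iff K _ _).mp this
end

section
/- Let L be a finite-dimensional supersolvable Lie algebra over a field K, i.e., there is a chain of Lie ideals 0 = I₀ ⊆ I₁ ⊆ ⋯ ⊆ I_n = L of L with dim I_j = j for each j. Then the derived algebra ⁅L, L⁆ is a nilpotent Lie algebra. -/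
/-!
On each one-dimensional quotient `I_{j+1}/I_j` the algebra `L` acts by commuting scalars, so the
derived algebra `L' = ⁅L, L⁆` maps `I_{j+1}` into `I_j`. Thus `L'` moves every element of `L` one
step down the flag, so `L` is a nilpotent `L'`-module, and hence so is its submodule `L'`.
-/

/-- A finite-dimensional Lie algebra is supersolvable if it admits a chain of
Lie ideals `0 = I₀ ⊆ I₁ ⊆ ⋯ ⊆ Iₙ = L` with `dim Iⱼ = j` for each `j`. -/
def LieAlgebra.IsSupersolvable (K : Type*) (L : Type*) [Field K] [LieRing L]
    [LieAlgebra K L] : Prop :=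
  ∃ (n : ℕ) (I : ℕ → LieIdeal K L),
    I 0 = ⊥ ∧ I n = ⊤ ∧ (∀ j, j < n → I j ≤ I (j + 1)) ∧
    ∀ j, j ≤ n → Module.finrank K (I j) = j

open Module LieAlgebra LieModule

theorem Module.End.commute_of_finrank_le_one {K V : Type*} [Field K] [AddCommGroup V]
    [Module K V] [Module.Finite K V] (h : finrank K V ≤ 1) (f g : Module.End K V) :
    Commute f g := by
  obtain ⟨v, hv⟩ := finrank_le_one_iff.mp h
  ext x
  obtain ⟨a, rfl⟩ := hv x
  obtain ⟨b, hb⟩ := hv (f v)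
  obtain ⟨c, hc⟩ := hv (g v)
  simp only [Module.End.mul_apply, map_smul, ← hb, ← hc, smul_comm b c]

section FiniteDimensional

variable {K L M : Type*} [Field K] [LieRing L] [LieAlgebra K L]
  [AddCommGroup M] [Module K M] [LieRingModule L M] [LieModule K L M]

theorem LieModule.derivedSeries_le_ker_of_finrank_le_one [Module.Finite K M]
    (h : finrank K M ≤ 1) : derivedSeries K L 1 ≤ LieModule.ker K L M := by
  rw [derivedSeries_def, derivedSeriesOfIdeal_succ, derivedSeriesOfIdeal_zero,
    LieSubmodule.lie_le_iff]
  intro x _ y _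
  rw [LieModule.mem_ker]
  intro m
  have hcomm := LinearMap.congr_fun
    (Module.End.commute_of_finrank_le_one h (toEnd K L M x) (toEnd K L M y)).eq m
  rw [lie_lie, sub_eq_zero]
  simpa using hcomm

theorem LieSubmodule.derivedSeries_lie_le_of_finrank_le_succ [FiniteDimensional K M]
    {N₁ N₂ : LieSubmodule K L M} (hle : N₁ ≤ N₂) (h : finrank K N₂ ≤ finrank K N₁ + 1) :
    ⁅derivedSeries K L 1, N₂⁆ ≤ N₁ := by
  set N := N₁.comap N₂.incl
  have hN : finrank K (N : Submodule K N₂) = finrank K N₁ :=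
    (Submodule.comapSubtypeEquivOfLe hle).finrank_eq
  have hQ : finrank K (N₂ ⧸ N) ≤ 1 := by
    have := (N : Submodule K N₂).finrank_quotient_add_finrank
    change finrank K (N₂ ⧸ (N : Submodule K N₂)) ≤ 1
    omega
  rw [LieSubmodule.lie_le_iff]
  intro z hz m hm
  have hzm := (LieModule.mem_ker K L _ z).mp (derivedSeries_le_ker_of_finrank_le_one hQ hz)
    (LieSubmodule.Quotient.mk' N ⟨m, hm⟩)
  rwa [← LieModuleHom.map_lie, LieSubmodule.Quotient.mk_eq_zero] at hzm

end FiniteDimensional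

theorem LieModule.isNilpotent_of_chain_lie_le {R L M : Type*} [CommRing R] [LieRing L]
    [LieAlgebra R L] [AddCommGroup M] [Module R M] [LieRingModule L M] [LieModule R L M]
    (I : LieIdeal R L) {n : ℕ} (N : ℕ → LieSubmodule R L M) (h0 : N 0 = ⊥) (hn : N n = ⊤)
    (hstep : ∀ j < n, ⁅I, N (j + 1)⁆ ≤ N j) : IsNilpotent I M := by
  have hlcs : ∀ k j, j + k = n → I.lcs M k ≤ N j := by
    intro k
    induction k with
    | zero => rintro j rfl; simpa using hn
    | succ k ih =>
      intro j hj
      rw [LieIdeal.lcs_succ]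
      exact (LieSubmodule.mono_lie_right I (ih (j + 1) (by omega))).trans (hstep j (by omega))
  refine (isNilpotent_iff R I M).mpr ⟨n, ?_⟩
  rw [← LieSubmodule.toSubmodule_inj, ← LieIdeal.coe_lcs_eq, LieSubmodule.bot_toSubmodule,
    LieSubmodule.toSubmodule_eq_bot, eq_bot_iff, ← h0]
  exact hlcs n 0 (zero_add n)

/-- Lemma 5: the derived algebra of a finite-dimensional supersolvable Lie
algebra is nilpotent. -/
theorem derived_nilpotent_of_supersolvable
    (K : Type*) (L : Type*) [Field K]
    [LieRing L] [LieAlgebra K L] [FiniteDimensional K L]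
    (h : LieAlgebra.IsSupersolvable K L) :
    LieModule.IsNilpotent (LieAlgebra.derivedSeries K L 1) (LieAlgebra.derivedSeries K L 1) := by
  obtain ⟨n, I, h0, hn, hmono, hdim⟩ := h
  have hL : IsNilpotent (derivedSeries K L 1) L :=
    isNilpotent_of_chain_lie_le _ I h0 hn fun j hj =>
      LieSubmodule.derivedSeries_lie_le_of_finrank_le_succ (hmono j hj)
        (by rw [hdim j hj.le, hdim (j + 1) hj])
  exact Function.Injective.lieModuleIsNilpotent (R := K) (L := derivedSeries K L 1)
    (M := derivedSeries K L 1) (f := LieHom.id) (g := (derivedSeries K L 1 : Submodule K L).subtype)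
    (fun _ _ => rfl) Subtype.val_injective
end

section
/- Let L be a finite-dimensional Lie algebra with nilpotent derived algebra ⁅L, L⁆, and let A be a minimal Lie ideal of L (a nonzero Lie ideal containing no Lie ideal of L other than 0 and itself). Then ⁅⁅L, L⁆, A⁆ = 0. -/
/-!
If `⁅L², A⁆ ≠ 0`, minimality of `A` forces `⁅L², A⁆ = A`, so `A ⊆ L²` and, viewed inside `L²`,
`A` is an ideal fixed by bracketing with `L²`. Such an ideal lies in every term of the lower
central series of `L²`, hence vanishes because `L²` is nilpotent.
-/

namespace LieSubmodule

variable {R L M : Type*} [CommRing R] [LieRing L] [LieAlgebra R L]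
  [AddCommGroup M] [Module R M] [LieRingModule L M]

theorem lcs_mono {N₁ N₂ : LieSubmodule R L M} (h : N₁ ≤ N₂) (k : ℕ) : N₁.lcs k ≤ N₂.lcs k := by
  induction k with
  | zero => exact h
  | succ k ih => simpa only [lcs_succ] using mono_lie_right ⊤ ih

theorem lcs_eq_self_of_top_lie_eq_self {N : LieSubmodule R L M}
    (hN : ⁅(⊤ : LieIdeal R L), N⁆ = N) (k : ℕ) : N.lcs k = N := by
  induction k with
  | zero => rfl
  | succ k ih => rw [lcs_succ, ih, hN]

theorem eq_bot_of_top_lie_eq_self [LieModule R L M] [LieModule.IsNilpotent L M]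
    {N : LieSubmodule R L M} (hN : ⁅(⊤ : LieIdeal R L), N⁆ = N) : N = ⊥ := by
  obtain ⟨k, hk⟩ := LieModule.IsNilpotent.nilpotent R L M
  rw [_root_.eq_bot_iff, ← hk, ← lcs_eq_self_of_top_lie_eq_self hN k]
  exact lcs_mono le_top k

end LieSubmodule

namespace LieIdeal

variable {R L : Type*} [CommRing R] [LieRing L] [LieAlgebra R L]

theorem eq_bot_of_lie_eq_self {I A : LieIdeal R L} [LieRing.IsNilpotent I] (hA : ⁅I, A⁆ = A) :
    A = ⊥ := by
  have hAI : A ≤ I := hA ▸ LieSubmodule.lie_le_left I A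
  have hcomap : ⁅(⊤ : LieIdeal R I), comap I.incl A⁆ = comap I.incl A := by
    rw [← comap_incl_self, comap_bracket_incl, inf_idem, inf_eq_right.mpr hAI, hA]
  rw [← inf_eq_right.mpr hAI, ← map_comap_incl, LieSubmodule.eq_bot_of_top_lie_eq_self hcomap]
  exact (gc_map_comap I.incl).l_bot

end LieIdeal

theorem derived_bracket_minimal_ideal_eq_zero_general
    (K : Type*) (L : Type*) [Field K]
    [LieRing L] [LieAlgebra K L]
    (hL : LieRing.IsNilpotent (LieAlgebra.derivedSeries K L 1))
    (A : LieIdeal K L) (hA : IsAtom A) :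
    ∀ u ∈ LieAlgebra.derivedSeries K L 1, ∀ a ∈ A, ⁅u, a⁆ = 0 := by
  intro u hu a ha
  rcases hA.le_iff.mp (LieSubmodule.lie_le_right A (LieAlgebra.derivedSeries K L 1)) with
    hbot | hself
  · exact (LieSubmodule.mem_bot _).mp (hbot ▸ LieSubmodule.lie_mem_lie hu ha)
  · exact absurd (LieIdeal.eq_bot_of_lie_eq_self hself) hA.1

/-- If `L` is a finite-dimensional Lie algebra with nilpotent derived algebra
and `A` is a minimal Lie ideal of `L`, then `⁅⁅L, L⁆, A⁆ = 0`. -/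
theorem derived_bracket_minimal_ideal_eq_zero
    (K : Type*) (L : Type*) [Field K]
    [LieRing L] [LieAlgebra K L] [FiniteDimensional K L]
    (hL : LieRing.IsNilpotent (LieAlgebra.derivedSeries K L 1))
    (A : LieIdeal K L) (hA : IsAtom A) :
    ∀ u ∈ LieAlgebra.derivedSeries K L 1, ∀ a ∈ A, ⁅u, a⁆ = 0 :=
  derived_bracket_minimal_ideal_eq_zero_general K L hL A hA
end

section
/- Let K be an infinite field and L a finite-dimensional Lie algebra over K. If for every triple of elements x, y, z ∈ L the Lie subalgebra H of L generated by {x, y, z} is abelian-by-nilpotent (i.e., H has an abelian Lie ideal A with H/A nilpotent), then L is abelian-by-nilpotent. -/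
/-!
Pick `x` whose Engel subalgebra `L₀ = engel K x` is a Cartan subalgebra (this is where `K`
infinite is needed) and let `L = L₀ ⊕ L₁` be the Fitting decomposition of `ad x`, so that
`L₁ = ⋂ₖ range (ad x)ᵏ ⊆ range (ad x)ⁿ` with `n = dim L`. Given `c, c' ∈ L`, let `A` be an abelian
ideal of `H = ⟨x, c, c'⟩` with `H / A` nilpotent. Since `dim (H / A) ≤ n`, the nilpotent map
`ad x` on `H / A` satisfies `(ad x)ⁿ = 0`, so `(ad x)ⁿ c` and `(ad x)ⁿ c'` lie in `A` and commute.
Hence `L₁` is abelian; being `L₀`-stable it is then an ideal, and `L / L₁` is a quotient of the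
nilpotent `L₀`.
-/

open LieAlgebra LieModule LieSubalgebra Module

section Codisjoint

variable {R L : Type*} [CommRing R] [LieRing L] [LieAlgebra R L]

lemma lie_mem_of_codisjoint {H : LieSubalgebra R L} {W : Submodule R L}
    (hHW : Codisjoint H.toSubmodule W) (hH : ∀ u ∈ H, ∀ w ∈ W, ⁅u, w⁆ ∈ W)
    (hW : ∀ w ∈ W, ∀ w' ∈ W, ⁅w, w'⁆ = 0) {z w : L} (hw : w ∈ W) : ⁅z, w⁆ ∈ W := by
  obtain ⟨u, hu, w', hw', rfl⟩ := Submodule.mem_sup.mp (hHW.eq_top ▸ Submodule.mem_top (x := z))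
  rw [add_lie, hW w' hw' w hw, add_zero]
  exact hH u hu w hw

lemma isNilpotent_quotient_of_codisjoint (H : LieSubalgebra R L) [LieRing.IsNilpotent H]
    {I : LieIdeal R L} (hHI : Codisjoint H.toSubmodule I.toSubmodule) :
    LieRing.IsNilpotent (L ⧸ I) := by
  let π : L →ₗ⁅R⁆ L ⧸ I := { LieSubmodule.Quotient.mk' I with map_lie' := rfl }
  refine Function.Surjective.lieAlgebra_isNilpotent (f := π.comp H.incl) ?_
  intro q
  obtain ⟨z, rfl⟩ := LieSubmodule.Quotient.surjective_mk' I q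
  obtain ⟨u, hu, w, hw, rfl⟩ := Submodule.mem_sup.mp (hHI.eq_top ▸ Submodule.mem_top (x := z))
  refine ⟨⟨u, hu⟩, ?_⟩
  change LieSubmodule.Quotient.mk' I u = LieSubmodule.Quotient.mk' I (u + w)
  rw [map_add, (LieSubmodule.Quotient.mk_eq_zero _).mpr hw, add_zero]

theorem exists_isLieAbelian_isNilpotent_quotient_of_codisjoint (H : LieSubalgebra R L)
    [LieRing.IsNilpotent H] {W : Submodule R L} (hHW : Codisjoint H.toSubmodule W)
    (hH : ∀ u ∈ H, ∀ w ∈ W, ⁅u, w⁆ ∈ W) (hW : ∀ w ∈ W, ∀ w' ∈ W, ⁅w, w'⁆ = 0) :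
    ∃ A : LieIdeal R L, IsLieAbelian A ∧ LieRing.IsNilpotent (L ⧸ A) := by
  let A : LieIdeal R L := { W with lie_mem := lie_mem_of_codisjoint hHW hH hW }
  exact ⟨A, ⟨fun a b ↦ Subtype.ext (hW a a.2 b b.2)⟩, isNilpotent_quotient_of_codisjoint H hHW⟩

end Codisjoint

section Finite

variable {K : Type*} [Field K]

lemma LieIdeal.ad_pow_mem_of_finrank_quotient_le {H : Type*} [LieRing H] [LieAlgebra K H]
    (A : LieIdeal K H) [LieRing.IsNilpotent (H ⧸ A)] [FiniteDimensional K (H ⧸ A)] {n : ℕ}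
    (hn : finrank K (H ⧸ A) ≤ n) (y v : H) : (ad K H y ^ n) v ∈ A := by
  let π : H →ₗ[K] H ⧸ A := LieSubmodule.Quotient.mk' A
  have hπ : (ad K (H ⧸ A) (π y) ^ n) ∘ₗ π = π ∘ₗ (ad K H y ^ n) :=
    Module.End.commute_pow_left_of_commute (f := π) (g := ad K H y) rfl n
  obtain ⟨m, hm⟩ := isNilpotent_toEnd_of_isNilpotent K (H ⧸ A) (H ⧸ A) (π y)
  have hker : π v ∈ LinearMap.ker (ad K (H ⧸ A) (π y) ^ finrank K (H ⧸ A)) :=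
    Module.End.ker_pow_le_ker_pow_finrank _ m (by simp [ad, hm])
  rw [← LieSubmodule.Quotient.mk_eq_zero]
  exact (LinearMap.congr_fun hπ v).symm.trans (Module.End.pow_map_zero_of_le hn hker)

variable {L : Type*} [LieRing L] [LieAlgebra K L] [FiniteDimensional K L]

lemma lie_ad_pow_finrank_eq_zero {H : LieSubalgebra K L} (A : LieIdeal K H) [IsLieAbelian A]
    [LieRing.IsNilpotent (H ⧸ A)] {x c c' : L} (hx : x ∈ H) (hc : c ∈ H) (hc' : c' ∈ H) :
    ⁅(ad K L x ^ finrank K L) c, (ad K L x ^ finrank K L) c'⁆ = 0 := by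
  have hn : finrank K (H ⧸ A) ≤ finrank K L :=
    (Submodule.finrank_quotient_le _).trans (Submodule.finrank_le H.toSubmodule)
  let a : A := ⟨_, A.ad_pow_mem_of_finrank_quotient_le hn ⟨x, hx⟩ ⟨c, hc⟩⟩
  let a' : A := ⟨_, A.ad_pow_mem_of_finrank_quotient_le hn ⟨x, hx⟩ ⟨c', hc'⟩⟩
  have : ((⁅a, a'⁆ : A) : H) = 0 := by rw [trivial_lie_zero]; rfl
  simpa [a, a', coe_ad_pow] using congrArg ((↑) : H → L) this

lemma codisjoint_engel_posFittingCompOf (x : L) [LieRing.IsNilpotent (engel K x)] :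
    Codisjoint (engel K x).toSubmodule
      (posFittingCompOf K L (⟨x, self_mem_engel K x⟩ : engel K x)).toSubmodule := by
  have := (isCompl_genWeightSpaceOf_zero_posFittingCompOf K (engel K x) L
    ⟨x, self_mem_engel K x⟩).codisjoint
  rw [← LieSubmodule.codisjoint_toSubmodule] at this
  exact this

end Finite

/-- Theorem 8: over an infinite field, the class of abelian-by-nilpotent
finite-dimensional Lie algebras is 3-recognizable: if every subalgebra
generated by three elements is abelian-by-nilpotent, then so is `L`. -/
theorem abelianByNilpotent_of_three_generated
    (K : Type*) (L : Type*) [Field K] [Infinite K]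
    [LieRing L] [LieAlgebra K L] [FiniteDimensional K L]
    (h : ∀ x y z : L,
      ∃ A : LieIdeal K (LieSubalgebra.lieSpan K L {x, y, z}),
        IsLieAbelian A ∧
          LieRing.IsNilpotent ((LieSubalgebra.lieSpan K L {x, y, z}) ⧸ A)) :
    ∃ A : LieIdeal K L, IsLieAbelian A ∧ LieRing.IsNilpotent (L ⧸ A) := by
  obtain ⟨x, hx⟩ := exists_isCartanSubalgebra_engel K L
  have := hx.nilpotent
  let x' : engel K x := ⟨x, self_mem_engel K x⟩
  have hW : ∀ w ∈ posFittingCompOf K L x', ∀ w' ∈ posFittingCompOf K L x', ⁅w, w'⁆ = 0 := by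
    rintro w hw w' hw'
    obtain ⟨c, rfl⟩ := (mem_posFittingCompOf K x' w).mp hw (finrank K L)
    obtain ⟨c', rfl⟩ := (mem_posFittingCompOf K x' w').mp hw' (finrank K L)
    obtain ⟨A, _, _⟩ := h x c c'
    exact lie_ad_pow_finrank_eq_zero A (subset_lieSpan (by simp [x'])) (subset_lieSpan (by simp))
      (subset_lieSpan (by simp))
  exact exists_isLieAbelian_isNilpotent_quotient_of_codisjoint (engel K x)
    (codisjoint_engel_posFittingCompOf x)
    (fun u hu _ hw ↦ (posFittingCompOf K L x').lie_mem (x := ⟨u, hu⟩) hw) hW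
end
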